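/- arXiv:1301.5409 — 5 statements merged into one kernel-verified Lean document; each statement's English description precedes it below -/
import Mathlib

section
/- For the 2×2 matrices P(φ) = [[1, -tan φ],[0,0]] and R(φ) = [[cos 2φ, -sin 2φ],[sin 2φ, cos 2φ]], for every natural number m and every real φ with cos φ ≠ 0, one has P(φ) · R(φ)^m · P(φ) = (cos((2m+1)φ)/cos φ) · P(φ). -/
open Real Matrix

noncomputable def P (φ : ℝ) : Matrix (Fin 2) (Fin 2) ℝ := !![1, -Real.tan φ; 0, 0]

noncomputable def R (φ : ℝ) : Matrix (Fin 2) (Fin 2) ℝ :=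
  !![Real.cos (2*φ), -Real.sin (2*φ); Real.sin (2*φ), Real.cos (2*φ)]

noncomputable def opNorm (A : Matrix (Fin 2) (Fin 2) ℝ) : ℝ :=
  ‖Matrix.toEuclideanCLM (𝕜 := ℝ) A‖
theorem stmt0 (m : ℕ) (φ : ℝ) (hφ : Real.cos φ ≠ 0) :
    P φ * (R φ) ^ m * P φ = (Real.cos ((2 * (m : ℝ) + 1) * φ) / Real.cos φ) • P φ := by
  have hR : (R φ) ^ m = !![Real.cos (2*m*φ), -Real.sin (2*m*φ);
      Real.sin (2*m*φ), Real.cos (2*m*φ)] := by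
    induction m with
    | zero => simp [Matrix.one_fin_two]
    | succ n ih =>
      rw [pow_succ, ih, R]
      have h : (2 * ((n:ℝ)+1) * φ) = 2*n*φ + 2*φ := by ring
      push_cast
      rw [h, Real.cos_add, Real.sin_add]
      ext i j
      fin_cases i <;> fin_cases j <;>
        simp [Matrix.mul_apply, Fin.sum_univ_succ] <;> ring
  rw [hR, P, Real.tan_eq_sin_div_cos]
  have h : (2 * (m:ℝ) + 1) * φ = 2*m*φ + φ := by ring
  rw [h, Real.cos_add]
  ext i j
  fin_cases i <;> fin_cases j <;>
    simp [Matrix.mul_apply, Fin.sum_univ_succ] <;>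
    field_simp <;> ring_nf <;> tauto
end

section
/- Let φ = π/(2n+1) for a positive integer n, P(φ) = [[1, -tan φ],[0,0]] and R(φ) the rotation by angle 2φ. Then P(φ) · R(φ)^n · P(φ) = -(cos φ)⁻¹ · P(φ). -/
open Real Matrix

/-!
`P φ` has rank one with row space spanned by `(1, -tan φ)`, so `P φ * M * P φ` is the scalar
`M 0 0 - tan φ * M 1 0` times `P φ` for every `M`. With `M = R φ ^ n = R (n φ)` and
`2 n φ = π - φ`, that scalar is `-cos φ - tan φ * sin φ = -(cos φ)⁻¹`.
-/

lemma R_zero : R 0 = 1 := by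
  simp [R, Matrix.one_fin_two]

lemma R_mul_R (a b : ℝ) : R a * R b = R (a + b) := by
  simp only [R, Matrix.mul_fin_two, mul_add, cos_add, sin_add]
  congr 1; ring_nf

lemma R_pow (φ : ℝ) (k : ℕ) : R φ ^ k = R (k * φ) := by
  induction k with
  | zero => simp [R_zero]
  | succ k ih => rw [pow_succ, ih, R_mul_R]; push_cast; ring_nf

lemma P_mul_mul_P (φ : ℝ) (M : Matrix (Fin 2) (Fin 2) ℝ) :
    P φ * M * P φ = (M 0 0 - tan φ * M 1 0) • P φ := by
  conv_lhs => rw [eta_fin_two M]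
  simp only [P, mul_fin_two, smul_of, smul_vec2, smul_eq_mul]
  congr 1
  ring_nf

/-- Also true when `cos φ = 0`, where both sides vanish since `tan φ = 0 = (cos φ)⁻¹`. -/
lemma neg_cos_sub_tan_mul_sin (φ : ℝ) : -cos φ - tan φ * sin φ = -(cos φ)⁻¹ := by
  rcases eq_or_ne (cos φ) 0 with hcos | hcos
  · simp [tan_eq_sin_div_cos, hcos]
  · rw [tan_eq_sin_div_cos]
    field_simp
    linear_combination -sin_sq_add_cos_sq φ

theorem stmt1_general (n : ℕ) (φ : ℝ) (hφ : φ = Real.pi / (2 * (n : ℝ) + 1)) :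
    P φ * (R φ) ^ n * P φ = (-(Real.cos φ)⁻¹) • P φ := by
  have h2nφ : 2 * (n * φ) = π - φ := by
    rw [hφ]; field_simp; ring
  rw [R_pow, P_mul_mul_P, ← neg_cos_sub_tan_mul_sin]
  simp [R, h2nφ, cos_pi_sub, sin_pi_sub]

theorem stmt1 (n : ℕ) (hn : 0 < n) (φ : ℝ) (hφ : φ = Real.pi / (2 * (n : ℝ) + 1)) :
    P φ * (R φ) ^ n * P φ = (-(Real.cos φ)⁻¹) • P φ :=
  stmt1_general n φ hφ
end

section
/- Let n ≥ 1 be an integer, s_n = sin(π/(2n+1)), ν_n = 1 - s_n⁴, G = ν_n · P(π/(2n+1)) and H = ν_n · R(π/(2n+1)). Then for every positive integer i, (G · H^n · G)^i = (-(ν_n^{n+2})/cos(π/(2n+1)))^i · P(π/(2n+1)), and hence ‖(G H^n G)^i‖ ≥ |ν_n^{n+2}/cos(π/(2n+1))|^i. -/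
open Real Matrix

/-!
`P = P(φ)` is the rank-one idempotent `e₀ vᵀ` with `v = (1, -tan φ)`, so `P M P = (vᵀ M e₀) P` for
every `M`. For `M = Rⁿ = R(nφ)` this scalar is `cos((2n+1)φ) / cos φ`, which equals `-1 / cos φ`
at `φ = π/(2n+1)`. Hence `G Hⁿ G = c P` with `c = -ν^(n+2) / cos φ`, its `i`-th power is `cᶦ P`,
and the norm bound follows because a nonzero idempotent has operator norm at least `1`.
-/

lemma IsIdempotentElem.one_le_norm {A : Type*} [NormedRing A] {a : A}
    (h : IsIdempotentElem a) (ha : a ≠ 0) : 1 ≤ ‖a‖ := by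
  have hle : ‖a‖ * 1 ≤ ‖a‖ * ‖a‖ :=
    calc ‖a‖ * 1 = ‖a * a‖ := by rw [h.eq, mul_one]
      _ ≤ ‖a‖ * ‖a‖ := norm_mul_le a a
  exact le_of_mul_le_mul_left hle (norm_pos_iff.mpr ha)

lemma opNorm_smul (c : ℝ) (A : Matrix (Fin 2) (Fin 2) ℝ) :
    opNorm (c • A) = |c| * opNorm A := by
  rw [opNorm, opNorm, map_smul, norm_smul, Real.norm_eq_abs]

lemma one_le_opNorm_of_isIdempotentElem {A : Matrix (Fin 2) (Fin 2) ℝ} (h : IsIdempotentElem A)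
    (hA : A ≠ 0) : 1 ≤ opNorm A :=
  (h.map (Matrix.toEuclideanCLM (𝕜 := ℝ))).one_le_norm
    ((map_ne_zero_iff _ (Matrix.toEuclideanCLM (𝕜 := ℝ)).injective).mpr hA)

lemma isIdempotentElem_P (φ : ℝ) : IsIdempotentElem (P φ) := by
  unfold IsIdempotentElem
  simpa using P_mul_mul_P φ 1

lemma P_ne_zero (φ : ℝ) : P φ ≠ 0 := fun h => by
  simpa [P] using congrFun (congrFun h 0) 0

lemma P_mul_R_pow_mul_P {φ : ℝ} (hφ : cos φ ≠ 0) (n : ℕ) :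
    P φ * R φ ^ n * P φ = (cos ((2 * n + 1) * φ) / cos φ) • P φ := by
  rw [P_mul_mul_P, R_pow]
  congr 1
  simp only [R, of_apply, cons_val', cons_val_zero, cons_val_one, empty_val', cons_val_fin_one,
    tan_eq_sin_div_cos]
  rw [show (2 * n + 1) * φ = 2 * (n * φ) + φ by ring, cos_add]
  field_simp

lemma cos_pi_div_two_mul_add_one_ne_zero (n : ℕ) : cos (π / (2 * n + 1)) ≠ 0 := by
  rcases Nat.eq_zero_or_pos n with rfl | hn
  · norm_num
  · refine (cos_pos_of_mem_Ioo ⟨?_, ?_⟩).ne'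
    · linarith [show 0 < π / (2 * n + 1) by positivity, pi_pos]
    · rw [div_lt_div_iff₀ (by positivity) two_pos]
      nlinarith [pi_pos, (by exact_mod_cast hn : (1:ℝ) ≤ n)]

theorem stmt10_general (n : ℕ) (ν : ℝ)
    (G H : Matrix (Fin 2) (Fin 2) ℝ)
    (hG : G = ν • P (Real.pi / (2 * (n : ℝ) + 1)))
    (hH : H = ν • R (Real.pi / (2 * (n : ℝ) + 1)))
    (i : ℕ) (hi : 1 ≤ i) :
    (G * H ^ n * G) ^ i =
      (-(ν ^ (n + 2)) / Real.cos (Real.pi / (2 * (n : ℝ) + 1))) ^ i •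
        P (Real.pi / (2 * (n : ℝ) + 1)) ∧
    |ν ^ (n + 2) / Real.cos (Real.pi / (2 * (n : ℝ) + 1))| ^ i ≤
      opNorm ((G * H ^ n * G) ^ i) := by
  set φ := π / (2 * (n : ℝ) + 1)
  set c := -(ν ^ (n + 2)) / cos φ
  have hPRP : P φ * R φ ^ n * P φ = (-1 / cos φ) • P φ := by
    rw [P_mul_R_pow_mul_P (cos_pi_div_two_mul_add_one_ne_zero n),
      show (2 * (n : ℝ) + 1) * φ = π by simp only [φ]; field_simp, cos_pi]
  have hGHG : G * H ^ n * G = c • P φ := by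
    simp only [hG, hH, smul_pow, Matrix.smul_mul, Matrix.mul_smul, smul_smul, hPRP, c]
    congr 1
    field_simp
    ring
  have hpow : (G * H ^ n * G) ^ i = c ^ i • P φ := by
    rw [hGHG, smul_pow, (isIdempotentElem_P φ).pow_eq (by omega)]
  refine ⟨hpow, ?_⟩
  rw [hpow, opNorm_smul, abs_pow, ← abs_neg, ← neg_div]
  exact le_mul_of_one_le_right (by positivity)
    (one_le_opNorm_of_isIdempotentElem (isIdempotentElem_P φ) (P_ne_zero φ))

theorem stmt10 (n : ℕ) (hn : 1 ≤ n) (s ν : ℝ)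
    (hs : s = Real.sin (Real.pi / (2 * (n : ℝ) + 1))) (hν : ν = 1 - s ^ 4)
    (G H : Matrix (Fin 2) (Fin 2) ℝ)
    (hG : G = ν • P (Real.pi / (2 * (n : ℝ) + 1)))
    (hH : H = ν • R (Real.pi / (2 * (n : ℝ) + 1)))
    (i : ℕ) (hi : 1 ≤ i) :
    (G * H ^ n * G) ^ i =
      (-(ν ^ (n + 2)) / Real.cos (Real.pi / (2 * (n : ℝ) + 1))) ^ i •
        P (Real.pi / (2 * (n : ℝ) + 1)) ∧
    |ν ^ (n + 2) / Real.cos (Real.pi / (2 * (n : ℝ) + 1))| ^ i ≤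
      opNorm ((G * H ^ n * G) ^ i) :=
  stmt10_general n ν G H hG hH i hi
end

section
/- For all sufficiently large positive integers n, with s_n = sin(π/(2n+1)), G = (1 - s_n⁴)·P(π/(2n+1)), H = (1 - s_n⁴)·R(π/(2n+1)), there exists a sequence A : ℕ → Matrix (Fin 2) (Fin 2) ℝ with each A(k) ∈ {G, H} such that the operator norms of the products A(k)·A(k-1)·⋯·A(1) are unbounded as k → ∞. -/
open Real Matrix

/-- `prods A k = A k * A (k-1) * ⋯ * A 1` (with `prods A 0 = 1`). -/
noncomputable def prods (A : ℕ → Matrix (Fin 2) (Fin 2) ℝ) : ℕ → Matrix (Fin 2) (Fin 2) ℝ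
  | 0 => 1
  | k + 1 => A (k + 1) * prods A k

/-!
Write `φ = π / (2n + 1)` and `c = 1 - sin⁴ φ`. Then `H = c • Rot (2φ)`, so `Hⁿ = cⁿ • Rot (π - φ)`,
and the projection `P φ` maps the rotated first basis vector back onto a multiple of itself:
`G * Hⁿ = diag (-c^(n+1) / cos φ, 0)`. Repeating the block `H, …, H, G` therefore multiplies the
norm by `c^(n+1) / cos φ` each time, and this factor exceeds `1` because
`cos φ ≤ 1 - sin² φ / 2 < 1 - (n + 1) sin⁴ φ ≤ c^(n+1)` once `(n + 1) φ² < 1 / 2`.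
-/

open scoped Matrix.Norms.L2Operator

noncomputable def Rot (θ : ℝ) : Matrix (Fin 2) (Fin 2) ℝ :=
  !![cos θ, -sin θ; sin θ, cos θ]

theorem Rot_mul_Rot (θ ψ : ℝ) : Rot θ * Rot ψ = Rot (θ + ψ) := by
  ext i j
  fin_cases i <;> fin_cases j <;>
    simp [Rot, mul_apply, Fin.sum_univ_two, cos_add, sin_add] <;> ring

theorem Rot_zero : Rot 0 = 1 := by
  ext i j
  fin_cases i <;> fin_cases j <;> simp [Rot]

theorem Rot_pow (θ : ℝ) (j : ℕ) : Rot θ ^ j = Rot (j * θ) := by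
  induction j with
  | zero => simp [Rot_zero]
  | succ k ih => rw [pow_succ, ih, Rot_mul_Rot]; push_cast; ring_nf

theorem R_eq_Rot (φ : ℝ) : R φ = Rot (2 * φ) := rfl

theorem P_mul_Rot_pi_sub {φ : ℝ} (hcos : cos φ ≠ 0) :
    P φ * Rot (π - φ) = diagonal ![-(cos φ)⁻¹, 0] := by
  have hpyth := sin_sq_add_cos_sq φ
  ext i j
  fin_cases i <;> fin_cases j <;>
    simp [P, Rot, mul_apply, Fin.sum_univ_two, cos_pi_sub, sin_pi_sub, tan_eq_sin_div_cos] <;>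
    field_simp <;> linarith

theorem smul_P_mul_smul_R_pow (c : ℝ) {n : ℕ} {φ : ℝ} (hφ : (2 * n + 1) * φ = π)
    (hcos : cos φ ≠ 0) :
    (c • P φ) * (c • R φ) ^ n = diagonal ![-(c ^ (n + 1) / cos φ), 0] := by
  have hangle : n * (2 * φ) = π - φ := by linarith
  rw [R_eq_Rot, smul_pow, Rot_pow, hangle, smul_mul_smul, P_mul_Rot_pi_sub hcos,
    ← diagonal_smul]
  congr 1
  ext i
  fin_cases i <;> simp [pow_succ', div_eq_mul_inv]

theorem opNorm_diagonal (v : Fin 2 → ℝ) : opNorm (diagonal v) = ‖v‖ :=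
  l2_opNorm_diagonal v

noncomputable def cyclic (G H : Matrix (Fin 2) (Fin 2) ℝ) (n k : ℕ) : Matrix (Fin 2) (Fin 2) ℝ :=
  if n + 1 ∣ k then G else H

section Cyclic

variable {G H : Matrix (Fin 2) (Fin 2) ℝ} {n : ℕ}

theorem prods_cyclic_mul_add (j : ℕ) {i : ℕ} (hi : i ≤ n) :
    prods (cyclic G H n) (j * (n + 1) + i) = H ^ i * prods (cyclic G H n) (j * (n + 1)) := by
  induction i with
  | zero => simp
  | succ i ih =>
    have hndvd : ¬ n + 1 ∣ j * (n + 1) + (i + 1) := by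
      rw [Nat.dvd_add_right (dvd_mul_left _ _)]
      exact Nat.not_dvd_of_pos_of_lt (by omega) (by omega)
    rw [← add_assoc, prods, ih (by omega), cyclic, if_neg (by rwa [add_assoc]), pow_succ',
      mul_assoc]

theorem prods_cyclic_mul (j : ℕ) : prods (cyclic G H n) (j * (n + 1)) = (G * H ^ n) ^ j := by
  induction j with
  | zero => simp [prods]
  | succ j ih =>
    rw [show (j + 1) * (n + 1) = (j * (n + 1) + n) + 1 by ring, prods,
      prods_cyclic_mul_add j le_rfl, ih, cyclic, if_pos ⟨j + 1, by ring⟩, pow_succ', mul_assoc]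

theorem exists_lt_opNorm_prods_cyclic {v : Fin 2 → ℝ} (h : G * H ^ n = diagonal v)
    (hv : 1 < |v 0|) (C : ℝ) : ∃ k, C < opNorm (prods (cyclic G H n) k) := by
  obtain ⟨m, hm⟩ := pow_unbounded_of_one_lt C hv
  refine ⟨m * (n + 1), ?_⟩
  rw [prods_cyclic_mul, h, diagonal_pow, opNorm_diagonal]
  calc C < |v 0| ^ m := hm
    _ = ‖(v ^ m) 0‖ := by simp
    _ ≤ ‖v ^ m‖ := norm_le_pi_norm _ 0

end Cyclic

theorem cos_le_one_sub_sin_sq_div_two (x : ℝ) : cos x ≤ 1 - sin x ^ 2 / 2 := by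
  nlinarith [sin_sq_add_cos_sq x, sin_sq_le_one x, sq_nonneg (sin x ^ 2)]

theorem cos_lt_one_sub_sin_pow_four_pow {x : ℝ} (m : ℕ) (hsin : sin x ≠ 0)
    (hsmall : m * x ^ 2 < 1 / 2) : cos x < (1 - sin x ^ 4) ^ m := by
  have hs2 : 0 < sin x ^ 2 := by positivity
  have hms : m * sin x ^ 2 < 1 / 2 :=
    lt_of_le_of_lt (mul_le_mul_of_nonneg_left sin_sq_le_sq m.cast_nonneg) hsmall
  have hbernoulli : 1 + m * (-sin x ^ 4) ≤ (1 + -sin x ^ 4) ^ m :=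
    one_add_mul_le_pow (by nlinarith [sin_sq_le_one x]) m
  calc cos x ≤ 1 - sin x ^ 2 / 2 := cos_le_one_sub_sin_sq_div_two x
    _ < 1 + m * (-sin x ^ 4) := by nlinarith
    _ ≤ (1 - sin x ^ 4) ^ m := by simpa [sub_eq_add_neg] using hbernoulli

theorem stmt12 :
    ∃ N : ℕ, ∀ n : ℕ, N ≤ n →
      ∀ (s : ℝ), s = Real.sin (Real.pi / (2 * (n : ℝ) + 1)) →
      ∀ (G H : Matrix (Fin 2) (Fin 2) ℝ),
        G = (1 - s ^ 4) • P (Real.pi / (2 * (n : ℝ) + 1)) →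
        H = (1 - s ^ 4) • R (Real.pi / (2 * (n : ℝ) + 1)) →
        ∃ A : ℕ → Matrix (Fin 2) (Fin 2) ℝ,
          (∀ k, A k = G ∨ A k = H) ∧
          ∀ C : ℝ, ∃ k : ℕ, C < opNorm (prods A k) := by
  refine ⟨10, fun n hn s hs G H hG hH => ?_⟩
  set φ := π / (2 * (n : ℝ) + 1) with hφ
  have hn10 : (10 : ℝ) ≤ n := by exact_mod_cast hn
  have hφ0 : 0 < φ := by positivity
  have hφπ : φ < π / 2 := div_lt_div_of_pos_left pi_pos two_pos (by linarith)
  have hcos : 0 < cos φ := cos_pos_of_mem_Ioo ⟨by linarith, hφπ⟩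
  have hsin : sin φ ≠ 0 := (sin_pos_of_pos_of_lt_pi hφ0 (by linarith)).ne'
  have hsmall : ((n + 1 : ℕ) : ℝ) * φ ^ 2 < 1 / 2 := by
    rw [hφ, div_pow, mul_div_assoc', div_lt_iff₀ (by positivity)]
    have hpi : π ^ 2 ≤ 16 := by nlinarith [pi_le_four, pi_pos]
    push_cast
    nlinarith [mul_le_mul_of_nonneg_left hpi (by linarith : (0 : ℝ) ≤ n + 1)]
  have hgrowth : 1 < (1 - s ^ 4) ^ (n + 1) / cos φ := by
    rw [one_lt_div hcos, hs]
    exact cos_lt_one_sub_sin_pow_four_pow (n + 1) hsin hsmall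
  have hblock : G * H ^ n = diagonal ![-((1 - s ^ 4) ^ (n + 1) / cos φ), 0] := by
    rw [hG, hH]
    exact smul_P_mul_smul_R_pow _ (by rw [hφ]; field_simp) hcos.ne'
  refine ⟨cyclic G H n, fun k => ?_, exists_lt_opNorm_prods_cyclic hblock ?_⟩
  · unfold cyclic
    split_ifs <;> simp
  · simpa [abs_of_pos (one_pos.trans hgrowth)] using hgrowth
end

section
/- The set of pairs (A, B) of 2×2 real matrices for which there exist c and q < 1 with ‖C_k ⋯ C_1‖ ≤ c q^k for all k and all choices C_i ∈ {A, B} is an open subset of the space of pairs of 2×2 real matrices. -/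
/-!
A finite family is uniformly exponentially stable iff for some `m ≥ 1` every product of `m` of
its members has norm `< 1`: a long product splits into blocks of length `m`, each contracting by
some `q ^ m < 1`, and a short remainder of bounded norm. For fixed `m` there are finitely many such
products, each continuous in the family, so this is a finite intersection of open conditions.
Matrices are transported to operators on Euclidean space by `Matrix.toEuclideanCLM`.
-/

open Filter Topology

section

variable {ι R : Type*} [NormedRing R]

def UniformlyExpStable (a : ι → R) : Prop :=
  ∃ c q : ℝ, q < 1 ∧ ∀ w : List ι, ‖(w.map a).prod‖ ≤ c * q ^ w.length

theorem exists_pos_mul_pow_lt_one (c : ℝ) {q : ℝ} (hq : q < 1) :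
    ∃ m : ℕ, 0 < m ∧ c * q ^ m < 1 := by
  rcases lt_or_ge (-1) q with hq' | hq'
  · have h := ((tendsto_pow_atTop_nhds_zero_of_abs_lt_one (abs_lt.mpr ⟨hq', hq⟩)).const_mul
      c).eventually (gt_mem_nhds (by norm_num : c * 0 < 1))
    exact ((eventually_gt_atTop 0).and h).exists
  · -- for `q ≤ -1` an odd or an even power makes `c * q ^ m` nonpositive
    rcases le_or_gt c 0 with hc | hc
    · exact ⟨2, two_pos, by nlinarith [sq_nonneg q]⟩
    · exact ⟨1, one_pos, by nlinarith⟩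

theorem UniformlyExpStable.exists_norm_prod_lt_one {a : ι → R} (h : UniformlyExpStable a) :
    ∃ m : ℕ, 0 < m ∧ ∀ w : List ι, w.length = m → ‖(w.map a).prod‖ < 1 := by
  obtain ⟨c, q, hq, hbound⟩ := h
  obtain ⟨m, hm, hcq⟩ := exists_pos_mul_pow_lt_one c hq
  exact ⟨m, hm, fun w hw => (hbound w).trans_lt (hw ▸ hcq)⟩

theorem norm_prod_map_le_pow [NormOneClass R] {a : ι → R} {M : ℝ} (hM : ∀ i, ‖a i‖ ≤ M) :
    ∀ w : List ι, ‖(w.map a).prod‖ ≤ M ^ w.length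
  | [] => by simp
  | i :: w => by
    rw [List.map_cons, List.prod_cons, List.length_cons, pow_succ']
    exact (norm_mul_le _ _).trans <| mul_le_mul (hM i) (norm_prod_map_le_pow hM w)
      (norm_nonneg _) ((norm_nonneg _).trans (hM i))

theorem uniformlyExpStable_of_norm_prod_le_pow [NormOneClass R] {a : ι → R} {M q : ℝ} {m : ℕ}
    (hM : ∀ i, ‖a i‖ ≤ M) (hq0 : 0 < q) (hq1 : q < 1) (hm : 0 < m)
    (h : ∀ w : List ι, w.length = m → ‖(w.map a).prod‖ ≤ q ^ m) :
    UniformlyExpStable a := by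
  set C := (max M 1 / q) ^ m
  refine ⟨C, q, hq1, fun w => ?_⟩
  induction hn : w.length using Nat.strong_induction_on generalizing w with
  | _ n ih =>
  rcases lt_or_ge n m with hnm | hmn
  · have hMq : 1 ≤ max M 1 / q := (one_le_div hq0).mpr ((le_max_right _ _).trans' hq1.le)
    calc ‖(w.map a).prod‖ ≤ max M 1 ^ n :=
          hn ▸ norm_prod_map_le_pow (fun i => (hM i).trans (le_max_left _ _)) w
      _ = (max M 1 / q) ^ n * q ^ n := by rw [div_pow, div_mul_cancel₀ _ (by positivity)]
      _ ≤ C * q ^ n := mul_le_mul_of_nonneg_right (pow_le_pow_right₀ hMq hnm.le) (by positivity)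
  · have hw : w = w.take m ++ w.drop m := (List.take_append_drop m w).symm
    calc ‖(w.map a).prod‖
        = ‖((w.take m).map a).prod * ((w.drop m).map a).prod‖ := by
          rw [← List.prod_append, ← List.map_append, ← hw]
      _ ≤ q ^ m * (C * q ^ (n - m)) := by
          refine (norm_mul_le _ _).trans (mul_le_mul (h _ ?_) (ih _ (by omega) _ ?_)
            (norm_nonneg _) (by positivity)) <;> simp [hn, hmn]
      _ = C * q ^ n := by rw [mul_left_comm, pow_mul_pow_sub _ hmn]

theorem uniformlyExpStable_iff [Finite ι] [NormOneClass R] {a : ι → R} :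
    UniformlyExpStable a ↔
      ∃ m : ℕ, 0 < m ∧ ∀ w : List ι, w.length = m → ‖(w.map a).prod‖ < 1 := by
  refine ⟨UniformlyExpStable.exists_norm_prod_lt_one, fun ⟨m, hm, h⟩ => ?_⟩
  obtain ⟨M, hM⟩ := (Set.finite_range fun i => ‖a i‖).bddAbove
  have hpow : Tendsto (fun q : ℝ => q ^ m) (𝓝[<] 1) (𝓝 1) := by
    simpa using ((continuous_pow m : Continuous fun q : ℝ => q ^ m).tendsto 1).mono_left
      nhdsWithin_le_nhds
  -- there are finitely many words of length `m`, each of norm `< 1 = lim_{q → 1} q ^ m`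
  have hwords : ∀ᶠ q in 𝓝[<] (1 : ℝ),
      ∀ w ∈ {w : List ι | w.length = m}, ‖(w.map a).prod‖ ≤ q ^ m := by
    rw [eventually_all_finite (List.finite_length_eq ι m)]
    exact fun w hw => (hpow.eventually (lt_mem_nhds (h w hw))).mono fun _ => le_of_lt
  obtain ⟨q, hq, hq0, hq1⟩ := (hwords.and (Ioo_mem_nhdsLT one_pos)).exists
  exact uniformlyExpStable_of_norm_prod_le_pow (fun i => hM ⟨i, rfl⟩) hq0 hq1 hm hq

theorem isOpen_setOf_uniformlyExpStable [Finite ι] [NormOneClass R] :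
    IsOpen {a : ι → R | UniformlyExpStable a} := by
  have : {a : ι → R | UniformlyExpStable a} = ⋃ m, ⋃ (_ : 0 < m),
      ⋂ w ∈ {w : List ι | w.length = m}, {a | ‖(w.map a).prod‖ < 1} := by
    ext; simp [uniformlyExpStable_iff]
  rw [this]
  exact isOpen_iUnion fun m => isOpen_iUnion fun _ =>
    (List.finite_length_eq ι m).isOpen_biInter fun w _ =>
      isOpen_lt (continuous_list_prod w fun i _ => continuous_apply i).norm continuous_const

end

theorem forall_list_forall_mem_eq_or_eq_iff {α : Type*} (x y : α) (P : List α → Prop) :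
    (∀ l : List α, (∀ z ∈ l, z = x ∨ z = y) → P l) ↔ ∀ w : List (Fin 2), P (w.map ![x, y]) := by
  have hrange : ∀ z, z ∈ Set.range ![x, y] ↔ z = x ∨ z = y := by simp [eq_comm, or_comm]
  rw [← Set.forall_mem_range (f := List.map ![x, y]) (p := P), Set.range_list_map]
  simp only [Set.mem_ofPred_eq, hrange]

theorem stmt17 :
    IsOpen {p : Matrix (Fin 2) (Fin 2) ℝ × Matrix (Fin 2) (Fin 2) ℝ |
      ∃ c q : ℝ, q < 1 ∧
        ∀ l : List (Matrix (Fin 2) (Fin 2) ℝ), (∀ B ∈ l, B = p.1 ∨ B = p.2) →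
          opNorm l.prod ≤ c * q ^ l.length} := by
  set φ := Matrix.toEuclideanCLM (n := Fin 2) (𝕜 := ℝ)
  have hφ : Continuous φ :=
    LinearMap.continuous_of_finiteDimensional φ.toAlgEquiv.toLinearEquiv.toLinearMap
  have hpair : Continuous fun p : Matrix (Fin 2) (Fin 2) ℝ × Matrix (Fin 2) (Fin 2) ℝ =>
      φ ∘ ![p.1, p.2] :=
    continuous_pi fun i => hφ.comp ((continuous_apply i).comp (by fun_prop))
  convert isOpen_setOf_uniformlyExpStable.preimage hpair using 1
  ext p
  simp only [Set.mem_ofPred_eq, Set.mem_preimage, UniformlyExpStable,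
    forall_list_forall_mem_eq_or_eq_iff, opNorm, List.length_map, ← List.map_map, map_list_prod]
  rfl
end
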